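/- Let r≥2 be an integer and ψ∈C_p(ℝ). Assume there exist constants m>0 and α≥0 such that (i) m·d(x)≤ψ(x) for all x∈[0,1], where d(x)=dist(x,ℤ), and (ii) Δ_{n,k}(y;ψ)≤α for all n∈ℕ₀, 0≤k≤rⁿ-1, y∈(0,1). If 2mr>α, then U_ψ∈P_c with c=(2mr-α)/(2(r-1)), i.e., Δ_{n,k}(y;U_ψ)≤-2crⁿ for all admissible (n,k,y). -/

import Mathlib

/-- `C_p(ℝ)`: continuous, periodic with period 1, vanishing at 0. -/
def IsCp (f : ℝ → ℝ) : Prop := Continuous f ∧ (∀ x, f (x + 1) = f x) ∧ f 0 = 0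

/-- Forward difference δ⁺_{n,k}(y;f). -/
noncomputable def delP (r : ℕ) (f : ℝ → ℝ) (n : ℕ) (k : ℤ) (y : ℝ) : ℝ :=
  (f (((k : ℝ) + 1) / (r : ℝ) ^ n) - f (((k : ℝ) + y) / (r : ℝ) ^ n)) / ((1 - y) / (r : ℝ) ^ n)

/-- Backward difference δ⁻_{n,k}(y;f). -/
noncomputable def delM (r : ℕ) (f : ℝ → ℝ) (n : ℕ) (k : ℤ) (y : ℝ) : ℝ :=
  (f (((k : ℝ) + y) / (r : ℝ) ^ n) - f ((k : ℝ) / (r : ℝ) ^ n)) / (y / (r : ℝ) ^ n)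

/-- Second-order central difference Δ_{n,k}(y;f). -/
noncomputable def Del (r : ℕ) (f : ℝ → ℝ) (n : ℕ) (k : ℤ) (y : ℝ) : ℝ :=
  2 * (r : ℝ) ^ n * (delP r f n k y - delM r f n k y)

/-- The operator U: U_ψ(x) = Σ_{j≥0} ψ(rʲx)/rʲ. -/
noncomputable def Uop (r : ℕ) (ψ : ℝ → ℝ) (x : ℝ) : ℝ := ∑' j : ℕ, ψ ((r : ℝ) ^ j * x) / (r : ℝ) ^ j

/-- Distance to the integers. -/
noncomputable def dZ (x : ℝ) : ℝ := Metric.infDist x (Set.range (Int.cast : ℤ → ℝ))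

/-- The generalized Takagi function τ_r. -/
noncomputable def tak (r : ℕ) : ℝ → ℝ := Uop r dZ

/-- The class P_c: Δ_{n,k}(y;f) ≤ -2crⁿ for all admissible (n,k,y). -/
def memP (r : ℕ) (c : ℝ) (f : ℝ → ℝ) : Prop :=
  ∀ (n : ℕ) (k : ℤ), 0 ≤ k → k ≤ (r : ℤ) ^ n - 1 →
    ∀ y ∈ Set.Ioo (0 : ℝ) 1, Del r f n k y ≤ -2 * c * (r : ℝ) ^ n

/-- The parabola q_f(t,x;z). -/
noncomputable def qf (f : ℝ → ℝ) (t x z : ℝ) : ℝ := f z + (x - z) ^ 2 / (2 * t)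

lemma round_nearest (x : ℝ) (n : ℤ) : |x - round x| ≤ |x - (n : ℝ)| := by
  rcases eq_or_ne n (round x) with h | h
  · rw [h]
  · have h1 : (1 : ℝ) ≤ |(round x : ℝ) - (n : ℝ)| := by
      have hne : round x - n ≠ 0 := sub_ne_zero.mpr (Ne.symm h)
      have := Int.one_le_abs hne
      calc (1:ℝ) = ((1:ℤ) : ℝ) := by norm_num
        _ ≤ ((|round x - n| : ℤ) : ℝ) := by exact_mod_cast this
        _ = |(round x : ℝ) - (n : ℝ)| := by push_cast; rfl
    have h2 := abs_sub_round x
    have h3 : |(round x : ℝ) - (n:ℝ)| ≤ |(round x:ℝ) - x| + |x - (n:ℝ)| := abs_sub_le _ _ _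
    rw [abs_sub_comm (round x : ℝ) x] at h3
    linarith

lemma dZ_le_abs (x : ℝ) (n : ℤ) : dZ x ≤ |x - (n : ℝ)| := by
  have := Metric.infDist_le_dist_of_mem (x := x)
    (show ((n:ℝ)) ∈ Set.range (Int.cast : ℤ → ℝ) from ⟨n, rfl⟩)
  rwa [Real.dist_eq] at this

lemma dZ_eq (x : ℝ) : dZ x = |x - round x| := by
  apply le_antisymm (dZ_le_abs x (round x))
  by_contra h
  push_neg at h
  have hne : (Set.range (Int.cast : ℤ → ℝ)).Nonempty := ⟨(0:ℝ), 0, by norm_num⟩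
  rcases (Metric.infDist_lt_iff hne).mp h with ⟨z, ⟨p, rfl⟩, hz⟩
  rw [Real.dist_eq] at hz
  exact absurd hz (not_lt.mpr (round_nearest x p))

lemma dZ_nonneg' (x : ℝ) : 0 ≤ dZ x := Metric.infDist_nonneg

lemma dZ_le_half (x : ℝ) : dZ x ≤ 1/2 := by rw [dZ_eq]; exact abs_sub_round x

lemma dZ_int (x : ℝ) (p : ℤ) : dZ (x + (p : ℝ)) = dZ x := by
  rw [dZ_eq, dZ_eq, round_add_intCast]
  congr 1
  push_cast
  ring

lemma dZ_neg (x : ℝ) : dZ (-x) = dZ x := by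
  have h1 : ∀ y : ℝ, dZ (-y) ≤ dZ y := by
    intro y
    calc dZ (-y) ≤ |(-y) - ((-(round y) : ℤ) : ℝ)| := dZ_le_abs _ _
      _ = |y - round y| := by push_cast; rw [← abs_neg]; ring_nf
      _ = dZ y := (dZ_eq y).symm
  have h2 := h1 (-x)
  rw [neg_neg] at h2
  exact le_antisymm (h1 x) h2

lemma dZ_Icc {y : ℝ} (h0 : 0 ≤ y) (h1 : y ≤ 1) : dZ y = min y (1 - y) := by
  apply le_antisymm
  · apply le_min
    · calc dZ y ≤ |y - ((0:ℤ):ℝ)| := dZ_le_abs _ _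
        _ = y := by simp [abs_of_nonneg h0]
    · calc dZ y ≤ |y - ((1:ℤ):ℝ)| := dZ_le_abs _ _
        _ = 1 - y := by rw [Int.cast_one, abs_of_nonpos (by linarith)]; ring
  · rw [dZ_eq]
    rcases le_or_gt (round y) 0 with hn | hn
    · have hnr : (round y : ℝ) ≤ 0 := by exact_mod_cast hn
      exact (min_le_left _ _).trans (by linarith [le_abs_self (y - (round y : ℝ))])
    · have hnr : (1:ℝ) ≤ (round y : ℝ) := by exact_mod_cast hn
      exact (min_le_right _ _).trans (by linarith [neg_le_abs (y - (round y : ℝ))])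

lemma keyA (r : ℕ) (hr : 1 ≤ r) (x : ℝ) :
    0 ≤ dZ x * ((r:ℝ) * dZ x - 1) + dZ ((r:ℝ) * x) * (1 - dZ ((r:ℝ) * x)) := by
  have hrR : (1:ℝ) ≤ (r:ℝ) := by exact_mod_cast hr
  have hd0 := dZ_nonneg' x
  have hd2 := dZ_le_half x
  have he0 := dZ_nonneg' ((r:ℝ) * x)
  have he2 := dZ_le_half ((r:ℝ) * x)
  rcases le_or_gt 1 ((r:ℝ) * dZ x) with h | h
  · nlinarith
  · -- compute dZ (r*x)
    have e1 : (r:ℝ) * x = (r:ℝ) * (x - round x) + (((r:ℤ) * round x : ℤ) : ℝ) := by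
      push_cast; ring
    have e2 : dZ ((r:ℝ) * x) = dZ ((r:ℝ) * (x - round x)) := by rw [e1, dZ_int]
    have e3 : dZ ((r:ℝ) * (x - round x)) = dZ ((r:ℝ) * dZ x) := by
      rw [dZ_eq x]
      rcases abs_cases (x - round x) with ⟨habs, _⟩ | ⟨habs, _⟩
      · rw [habs]
      · rw [show (r:ℝ) * (x - round x) = -((r:ℝ) * |x - round x|) by rw [habs]; ring, dZ_neg]
    have e4 : dZ ((r:ℝ) * dZ x) = min ((r:ℝ) * dZ x) (1 - (r:ℝ) * dZ x) :=
      dZ_Icc (by positivity) h.le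
    have hee : dZ ((r:ℝ) * x) * (1 - dZ ((r:ℝ) * x)) = ((r:ℝ) * dZ x) * (1 - (r:ℝ) * dZ x) := by
      rw [e2, e3, e4]
      rcases min_cases ((r:ℝ) * dZ x) (1 - (r:ℝ) * dZ x) with ⟨hm, _⟩ | ⟨hm, _⟩ <;> rw [hm] <;> ring
    rw [hee]
    have hx : (0:ℝ) ≤ (1 - (r:ℝ) * dZ x) * (dZ x * ((r:ℝ) - 1)) :=
      mul_nonneg (by linarith) (mul_nonneg hd0 (by linarith))
    nlinarith [hx]

noncomputable def Phi (r : ℕ) (x : ℝ) : ℝ := (r:ℝ) / ((r:ℝ) - 1) * (dZ x * (1 - dZ x))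

lemma Phi_nonneg (r : ℕ) (hr : 2 ≤ r) (x : ℝ) : 0 ≤ Phi r x := by
  have hrR : (2:ℝ) ≤ (r:ℝ) := by exact_mod_cast hr
  have := dZ_nonneg' x
  have := dZ_le_half x
  have h1 : (0:ℝ) < (r:ℝ) - 1 := by linarith
  unfold Phi
  apply mul_nonneg (by positivity) (by nlinarith)

lemma Phi_le_one (r : ℕ) (hr : 2 ≤ r) (x : ℝ) : Phi r x ≤ 1 := by
  have hrR : (2:ℝ) ≤ (r:ℝ) := by exact_mod_cast hr
  have hd0 := dZ_nonneg' x
  have hd2 := dZ_le_half x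
  have h1 : (0:ℝ) < (r:ℝ) - 1 := by linarith
  have hfrac : (r:ℝ) / ((r:ℝ) - 1) ≤ 2 := by
    rw [div_le_iff₀ h1]; linarith
  have hprod : dZ x * (1 - dZ x) ≤ 1/2 := by nlinarith
  calc Phi r x ≤ 2 * (dZ x * (1 - dZ x)) := by
        unfold Phi; exact mul_le_mul_of_nonneg_right hfrac (by nlinarith)
    _ ≤ 1 := by nlinarith

lemma Phi_step (r : ℕ) (hr : 2 ≤ r) (x : ℝ) :
    Phi r x ≤ dZ x + Phi r ((r:ℝ) * x) / (r:ℝ) := by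
  have hrR : (2:ℝ) ≤ (r:ℝ) := by exact_mod_cast hr
  have h1 : (0:ℝ) < (r:ℝ) - 1 := by linarith
  have h0 : (0:ℝ) < (r:ℝ) := by linarith
  have key := keyA r (by omega) x
  have H : (r:ℝ) * (dZ x * (1 - dZ x)) ≤ ((r:ℝ) - 1) * dZ x + dZ ((r:ℝ)*x) * (1 - dZ ((r:ℝ)*x)) := by
    nlinarith [key]
  have heq : dZ x + Phi r ((r:ℝ)*x) / (r:ℝ) - Phi r x
      = (((r:ℝ) - 1) * dZ x + dZ ((r:ℝ)*x) * (1 - dZ ((r:ℝ)*x))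
         - (r:ℝ) * (dZ x * (1 - dZ x))) / ((r:ℝ) - 1) := by
    unfold Phi
    field_simp
  have hnn : 0 ≤ dZ x + Phi r ((r:ℝ)*x) / (r:ℝ) - Phi r x := by
    rw [heq]
    apply div_nonneg (by linarith) h1.le
  linarith

lemma summable_aux (r : ℕ) (hr : 2 ≤ r) (f : ℝ → ℝ) (C : ℝ) (hf : ∀ t, |f t| ≤ C) (x : ℝ) :
    Summable (fun j : ℕ => f ((r:ℝ)^j * x) / (r:ℝ)^j) := by
  have hr0 : 0 < r := by omega
  have h0 : (0:ℝ) < (r:ℝ) := by exact_mod_cast hr0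
  apply Summable.of_norm_bounded (g := fun j : ℕ => C * (1/(r:ℝ))^j)
    (((summable_geometric_of_lt_one (by positivity) (by rw [div_lt_one h0]; exact_mod_cast (by omega : 1 < r))).mul_left C))
  intro j
  rw [Real.norm_eq_abs, abs_div, abs_of_nonneg (by positivity : (0:ℝ) ≤ (r:ℝ)^j),
    one_div, inv_pow, mul_comm C, ← div_eq_inv_mul]
  gcongr
  exact hf _

lemma delta_add (r : ℕ) (f g h : ℝ → ℝ) (hf : ∀ x, f x = g x + h x) (n : ℕ) (k : ℤ) (y : ℝ) :
    Del r f n k y = Del r g n k y + Del r h n k y := by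
  simp only [Del, delP, delM, hf]
  ring

lemma delP_scale (r : ℕ) (hrne : (r:ℝ) ≠ 0) (g : ℝ → ℝ) (n : ℕ) (k : ℤ) (y : ℝ) :
    delP r (fun x => g ((r:ℝ) * x) / (r:ℝ)) (n+1) k y = delP r g n k y := by
  have harg : ∀ t : ℝ, (r:ℝ) * (t / (r:ℝ)^(n+1)) = t / (r:ℝ)^n := by
    intro t; field_simp; ring
  simp only [delP]
  rw [harg, harg, div_sub_div_same, div_div_eq_mul_div, div_div_eq_mul_div]
  congr 1
  rw [pow_succ]
  field_simp

lemma delM_scale (r : ℕ) (hrne : (r:ℝ) ≠ 0) (g : ℝ → ℝ) (n : ℕ) (k : ℤ) (y : ℝ) :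
    delM r (fun x => g ((r:ℝ) * x) / (r:ℝ)) (n+1) k y = delM r g n k y := by
  have harg : ∀ t : ℝ, (r:ℝ) * (t / (r:ℝ)^(n+1)) = t / (r:ℝ)^n := by
    intro t; field_simp; ring
  simp only [delM]
  rw [harg, harg, div_sub_div_same, div_div_eq_mul_div, div_div_eq_mul_div]
  congr 1
  rw [pow_succ]
  field_simp

lemma delta_scale (r : ℕ) (hrne : (r:ℝ) ≠ 0) (g : ℝ → ℝ) (n : ℕ) (k : ℤ) (y : ℝ) :
    Del r (fun x => g ((r:ℝ) * x) / (r:ℝ)) (n+1) k y = (r:ℝ) * Del r g n k y := by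
  simp only [Del, delP_scale r hrne, delM_scale r hrne]
  rw [pow_succ]
  ring

lemma lower_bound (r : ℕ) (hr : 2 ≤ r) (ψ : ℝ → ℝ) (m : ℝ) (hm : 0 ≤ m)
    (hψd : ∀ x, m * dZ x ≤ ψ x) (hψ0 : ∀ x, 0 ≤ ψ x)
    (hsum : ∀ x, Summable (fun j : ℕ => ψ ((r:ℝ)^j * x) / (r:ℝ)^j)) (y : ℝ) :
    m * Phi r y ≤ Uop r ψ y := by
  have hr0 : (0:ℝ) < (r:ℝ) := by exact_mod_cast (by omega : 0 < r)
  have hrne : (r:ℝ) ≠ 0 := ne_of_gt hr0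
  have key : ∀ N : ℕ, m * Phi r y ≤
      (∑ j ∈ Finset.range N, ψ ((r:ℝ)^j * y) / (r:ℝ)^j) + m * Phi r ((r:ℝ)^N * y) / (r:ℝ)^N := by
    intro N
    induction N with
    | zero => simp
    | succ N ih =>
      refine ih.trans ?_
      rw [Finset.sum_range_succ]
      have hstep := Phi_step r hr ((r:ℝ)^N * y)
      have h1 : m * Phi r ((r:ℝ)^N * y) ≤ m * (dZ ((r:ℝ)^N * y) + Phi r ((r:ℝ)*((r:ℝ)^N * y)) / (r:ℝ)) :=
        mul_le_mul_of_nonneg_left hstep hm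
      have h2 : m * Phi r ((r:ℝ)^N * y) / (r:ℝ)^N
          ≤ m * (dZ ((r:ℝ)^N * y) + Phi r ((r:ℝ)*((r:ℝ)^N * y)) / (r:ℝ)) / (r:ℝ)^N := by
        gcongr
      have harg : (r:ℝ) * ((r:ℝ)^N * y) = (r:ℝ)^(N+1) * y := by ring
      have h3 : m * (dZ ((r:ℝ)^N * y) + Phi r ((r:ℝ)*((r:ℝ)^N * y)) / (r:ℝ)) / (r:ℝ)^N
          = m * dZ ((r:ℝ)^N * y) / (r:ℝ)^N + m * Phi r ((r:ℝ)^(N+1) * y) / (r:ℝ)^(N+1) := by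
        rw [harg, pow_succ]
        field_simp
      have h4 : m * dZ ((r:ℝ)^N * y) / (r:ℝ)^N ≤ ψ ((r:ℝ)^N * y) / (r:ℝ)^N := by
        gcongr
        exact hψd _
      linarith
  have key2 : ∀ N : ℕ, m * Phi r y ≤ Uop r ψ y + m * (1/(r:ℝ))^N := by
    intro N
    refine (key N).trans ?_
    have hA : (∑ j ∈ Finset.range N, ψ ((r:ℝ)^j * y) / (r:ℝ)^j) ≤ Uop r ψ y :=
      Summable.sum_le_tsum (Finset.range N) (fun i _ => div_nonneg (hψ0 _) (by positivity)) (hsum y)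
    have hB : m * Phi r ((r:ℝ)^N * y) / (r:ℝ)^N ≤ m * (1/(r:ℝ))^N := by
      rw [one_div, inv_pow, ← div_eq_mul_inv]
      have : m * Phi r ((r:ℝ)^N * y) ≤ m := by
        nlinarith [Phi_le_one r hr ((r:ℝ)^N * y), Phi_nonneg r hr ((r:ℝ)^N * y)]
      gcongr
    linarith
  have hlim : Filter.Tendsto (fun N : ℕ => Uop r ψ y + m * (1/(r:ℝ))^N)
      Filter.atTop (nhds (Uop r ψ y + m * 0)) := by
    apply Filter.Tendsto.add tendsto_const_nhds
    apply Filter.Tendsto.const_mul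
    apply tendsto_pow_atTop_nhds_zero_of_lt_one (by positivity)
    rw [div_lt_one hr0]
    exact_mod_cast (by omega : 1 < r)
  have := ge_of_tendsto' hlim key2
  simpa using this
theorem stmt11 (r : ℕ) (hr : 2 ≤ r) (ψ : ℝ → ℝ) (hψ : IsCp ψ)
    (m α : ℝ) (hm : 0 < m) (hα : 0 ≤ α)
    (h1 : ∀ x ∈ Set.Icc (0:ℝ) 1, m * dZ x ≤ ψ x)
    (h2 : ∀ (n : ℕ) (k : ℤ), 0 ≤ k → k ≤ (r:ℤ)^n - 1 →
      ∀ y ∈ Set.Ioo (0:ℝ) 1, Del r ψ n k y ≤ α)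
    (hmα : α < 2 * m * r) :
    memP r ((2 * m * (r:ℝ) - α) / (2 * ((r:ℝ) - 1))) (Uop r ψ) := by
  have hrR : (2:ℝ) ≤ (r:ℝ) := by exact_mod_cast hr
  have hr0 : (0:ℝ) < (r:ℝ) := by linarith
  have hrne : (r:ℝ) ≠ 0 := ne_of_gt hr0
  have hr1 : (0:ℝ) < (r:ℝ) - 1 := by linarith
  have hPer : Function.Periodic ψ 1 := hψ.2.1
  have psi_int : ∀ (x : ℝ) (p : ℤ), ψ (x + (p:ℝ)) = ψ x := by
    intro x p
    simpa using (hPer.int_mul p) x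
  have psi_fract : ∀ x, ψ x = ψ (Int.fract x) := by
    intro x
    conv_lhs => rw [← Int.fract_add_floor x]
    rw [psi_int]
  have hψd : ∀ x, m * dZ x ≤ ψ x := by
    intro x
    rw [psi_fract x]
    have hd : dZ x = dZ (Int.fract x) := by
      conv_lhs => rw [← Int.fract_add_floor x]
      rw [dZ_int]
    rw [hd]
    exact h1 _ ⟨Int.fract_nonneg x, (Int.fract_lt_one x).le⟩
  have hψ0 : ∀ x, 0 ≤ ψ x := fun x =>
    le_trans (mul_nonneg hm.le (dZ_nonneg' _)) (hψd x)
  obtain ⟨C, hC⟩ := (isCompact_Icc (a := (0:ℝ)) (b := 1)).exists_bound_of_continuousOn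
    hψ.1.continuousOn
  have hCg : ∀ t, |ψ t| ≤ C := by
    intro t
    rw [psi_fract t]
    have := hC _ ⟨Int.fract_nonneg t, (Int.fract_lt_one t).le⟩
    simpa using this
  have hsum : ∀ x, Summable (fun j : ℕ => ψ ((r:ℝ)^j * x) / (r:ℝ)^j) :=
    summable_aux r hr ψ C hCg
  -- self-similarity
  have U_step : ∀ x, Uop r ψ x = ψ x + Uop r ψ ((r:ℝ)*x) / (r:ℝ) := by
    intro x
    have h0 := Summable.tsum_eq_zero_add (hsum x)
    unfold Uop
    rw [h0]
    congr 1
    · simp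
    · rw [← tsum_div_const]
      apply tsum_congr
      intro j
      rw [show (r:ℝ)^(j+1) * x = (r:ℝ)^j * ((r:ℝ)*x) by ring, div_div, ← pow_succ]
  have U_int : ∀ (x : ℝ) (p : ℤ), Uop r ψ (x + (p:ℝ)) = Uop r ψ x := by
    intro x p
    unfold Uop
    apply tsum_congr
    intro j
    have harg : ψ ((r:ℝ)^j * (x + (p:ℝ))) = ψ ((r:ℝ)^j * x) := by
      rw [show (r:ℝ)^j * (x + (p:ℝ)) = (r:ℝ)^j * x + (((r:ℤ)^j * p : ℤ):ℝ) by push_cast; ring,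
        psi_int]
    rw [harg]
  have U_zero : Uop r ψ 0 = 0 := by
    unfold Uop
    simp [hψ.2.2]
  have U_intpt : ∀ p : ℤ, Uop r ψ ((p:ℝ)) = 0 := by
    intro p
    have := U_int 0 p
    rw [zero_add] at this
    rw [this, U_zero]
  have U_lower : ∀ y ∈ Set.Ioo (0:ℝ) 1,
      m * ((r:ℝ)/((r:ℝ)-1)) * (y * (1-y)) ≤ Uop r ψ y := by
    intro y hy
    have := lower_bound r hr ψ m hm.le hψd hψ0 hsum y
    have hmin : dZ y * (1 - dZ y) = y * (1 - y) := by
      rw [dZ_Icc hy.1.le hy.2.le]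
      rcases min_cases y (1-y) with ⟨hmm, _⟩ | ⟨hmm, _⟩ <;> rw [hmm] <;> ring
    unfold Phi at this
    rw [hmin] at this
    linarith [this]
  -- extended second-difference bound for ψ
  have h2' : ∀ (n : ℕ) (k : ℤ), ∀ y ∈ Set.Ioo (0:ℝ) 1, Del r ψ n k y ≤ α := by
    intro n k y hy
    have hrn : (0:ℤ) < (r:ℤ)^n := pow_pos (by exact_mod_cast (by omega : 0 < r)) n
    set k' := k % (r:ℤ)^n with hk'
    have h0 : 0 ≤ k' := Int.emod_nonneg k (ne_of_gt hrn)
    have h1' : k' < (r:ℤ)^n := Int.emod_lt_of_pos k hrn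
    have hrnne : ((r:ℝ)^n) ≠ 0 := by positivity
    have hkR : (k:ℝ) = (k':ℝ) + ((k / (r:ℤ)^n : ℤ):ℝ) * (r:ℝ)^n := by
      have hdiv : ((r:ℤ)^n * (k / (r:ℤ)^n) + k' : ℤ) = k := Int.mul_ediv_add_emod k _
      have hcast := congrArg (Int.cast : ℤ → ℝ) hdiv
      push_cast at hcast
      linarith [hcast]
    have key : ∀ t : ℝ, ψ (((k:ℝ) + t)/(r:ℝ)^n) = ψ (((k':ℝ) + t)/(r:ℝ)^n) := by
      intro t
      have harg : ((k:ℝ) + t)/(r:ℝ)^n = ((k':ℝ) + t)/(r:ℝ)^n + ((k / (r:ℤ)^n : ℤ):ℝ) := by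
        field_simp
        linarith [hkR]
      rw [harg, psi_int]
    have key0 : ψ ((k:ℝ)/(r:ℝ)^n) = ψ ((k':ℝ)/(r:ℝ)^n) := by
      have := key 0
      simpa using this
    have hDel : Del r ψ n k y = Del r ψ n k' y := by
      simp only [Del, delP, delM]
      rw [key 1, key y, key0]
    rw [hDel]
    exact h2 n k' h0 (by omega) y hy
  -- decomposition step
  have Dstep : ∀ (n : ℕ) (k : ℤ) (y : ℝ),
      Del r (Uop r ψ) (n+1) k y = Del r ψ (n+1) k y + (r:ℝ) * Del r (Uop r ψ) n k y := by
    intro n k y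
    rw [delta_add r (Uop r ψ) ψ (fun x => Uop r ψ ((r:ℝ)*x) / (r:ℝ)) U_step (n+1) k y,
      delta_scale r hrne (Uop r ψ) n k y]
  -- base case
  have base : ∀ (k : ℤ), ∀ y ∈ Set.Ioo (0:ℝ) 1,
      Del r (Uop r ψ) 0 k y ≤ -(2 * m * (r:ℝ)/((r:ℝ)-1)) := by
    intro k y hy
    have hy0 : 0 < y := hy.1
    have h1y : 0 < 1 - y := by linarith [hy.2]
    have hD : Del r (Uop r ψ) 0 k y
        = 2 * ((0 - Uop r ψ y)/(1-y) - (Uop r ψ y - 0)/y) := by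
      simp only [Del, delP, delM, pow_zero, div_one]
      rw [show ((k:ℝ) + 1) = (((k+1:ℤ)):ℝ) by push_cast; ring, U_intpt,
        show ((k:ℝ) + y) = y + ((k:ℤ):ℝ) by push_cast; ring, U_int,
        show ((k:ℝ)) = ((k:ℤ):ℝ) from rfl, U_intpt]
      ring
    rw [hD]
    have hL := U_lower y hy
    have e1 : (0 - Uop r ψ y)/(1-y) ≤ -(m * ((r:ℝ)/((r:ℝ)-1)) * y) := by
      rw [div_le_iff₀ h1y]
      nlinarith [hL]
    have e2 : m * ((r:ℝ)/((r:ℝ)-1)) * (1-y) ≤ (Uop r ψ y - 0)/y := by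
      rw [le_div_iff₀ hy0]
      nlinarith [hL]
    have e3 : 2 * ((0 - Uop r ψ y)/(1-y) - (Uop r ψ y - 0)/y)
        ≤ 2 * (-(m * ((r:ℝ)/((r:ℝ)-1)) * y) - m * ((r:ℝ)/((r:ℝ)-1)) * (1-y)) := by
      linarith
    refine e3.trans (le_of_eq ?_)
    field_simp
    ring
  -- main induction
  have ind : ∀ (n : ℕ) (k : ℤ), ∀ y ∈ Set.Ioo (0:ℝ) 1,
      Del r (Uop r ψ) n k y
        ≤ α * (((r:ℝ)^n - 1)/((r:ℝ)-1)) - (2 * m * (r:ℝ)/((r:ℝ)-1)) * (r:ℝ)^n := by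
    intro n
    induction n with
    | zero =>
      intro k y hy
      have := base k y hy
      simp only [pow_zero]
      calc Del r (Uop r ψ) 0 k y ≤ -(2 * m * (r:ℝ)/((r:ℝ)-1)) := this
        _ = α * (((1:ℝ) - 1)/((r:ℝ)-1)) - (2 * m * (r:ℝ)/((r:ℝ)-1)) * 1 := by ring
    | succ n ih =>
      intro k y hy
      rw [Dstep n k y]
      have hψb := h2' (n+1) k y hy
      have hI := ih k y hy
      have hI' := mul_le_mul_of_nonneg_left hI hr0.le
      have heq : α + (r:ℝ) * (α * (((r:ℝ)^n - 1)/((r:ℝ)-1)) - (2*m*(r:ℝ)/((r:ℝ)-1)) * (r:ℝ)^n)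
          = α * (((r:ℝ)^(n+1) - 1)/((r:ℝ)-1)) - (2*m*(r:ℝ)/((r:ℝ)-1)) * (r:ℝ)^(n+1) := by
        field_simp
        ring
      linarith
  intro n k _ _ y hy
  refine (ind n k y hy).trans ?_
  have heq2 : α * (((r:ℝ)^n - 1)/((r:ℝ)-1)) - (2*m*(r:ℝ)/((r:ℝ)-1)) * (r:ℝ)^n
      - (-2 * ((2 * m * (r:ℝ) - α) / (2 * ((r:ℝ) - 1))) * (r:ℝ)^n) = -(α/((r:ℝ)-1)) := by
    field_simp
    ring
  have hge : 0 ≤ α/((r:ℝ)-1) := div_nonneg hα hr1.le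
  linarith
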